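/- arXiv:1703.09737 — 2 statements merged into one kernel-verified Lean document; each statement's English description precedes it below -/
import Mathlib

section
/- In the sorted level sequence τ of a (kn,n)-Dyck path's sweep map, if σ_i = W with τ_i = mn and σ_{i+1} = σ_{i+2} = S, then τ_{i+1} = τ_{i+2} = mn. -/
/-!
Merge sort is stable, so among the sweep entries at a level `ℓ` the first one is the step met
first when sweeping from right to left: the rightmost step starting at level `ℓ`. For `ℓ > 0`
this is an east step, because after a north step from level `ℓ` the path still has to return to
level `0`, and east steps lower the level by exactly `n` through multiples of `n`, so some later
step starts at level `ℓ` again. Hence an `S` in the sorted word never opens a new level, and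
`τᵢ₊₂ = τᵢ₊₁ = τᵢ = m n`.
-/

/-- Steps of a path: `true` = north step, `false` = east step.
The level of the lattice point reached after the steps `p`:
each north step adds `k*n`, each east step subtracts `n`. -/
def level (k n : ℕ) (p : List Bool) : ℤ :=
  (k * n : ℤ) * p.count true - (n : ℤ) * p.count false

/-- A `(kn,n)`-Dyck path: `n` north steps, `k*n` east steps, all prefix levels nonnegative. -/
def IsDyck (k n : ℕ) (p : List Bool) : Prop :=
  p.count true = n ∧ p.count false = k * n ∧ ∀ i ≤ p.length, 0 ≤ level k n (p.take i)

/-- The sweep map: label each step by the level of its starting endpoint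
(south endpoint for north steps, west endpoint for east steps), sweep the path
from right to left, and stably sort the labeled steps in nondecreasing order of level.
Entries are pairs `(τᵢ, σᵢ)` with `σᵢ = true` meaning `S` and `σᵢ = false` meaning `W`. -/
def sweep (k n : ℕ) (p : List Bool) : List (ℤ × Bool) :=
  ((List.range p.length).reverse.map fun i => (level k n (p.take i), p.getD i true)).mergeSort
    fun a b => decide (a.1 ≤ b.1)

/-- The S/W word output by the sweep map. -/
def sweepWord (k n : ℕ) (p : List Bool) : List Bool :=
  (sweep k n p).map Prod.snd

theorem List.filter_mergeSort_fiber {α β : Type*} [LinearOrder β] (f : α → β) (l : List α)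
    (c : β) :
    (l.mergeSort fun a b => decide (f a ≤ f b)).filter (fun a => decide (f a = c)) =
      l.filter (fun a => decide (f a = c)) := by
  set le : α → α → Bool := fun a b => decide (f a ≤ f b)
  set P : α → Bool := fun a => decide (f a = c)
  have trans : ∀ a b c, le a b → le b c → le a c := by
    simp only [le, decide_eq_true_eq]
    exact fun _ _ _ => le_trans
  have total : ∀ a b, le a b || le b a := by simp [le, le_total]
  have hfiber : (l.filter P).Pairwise (le · ·) :=
    List.pairwise_of_forall_mem_list fun a ha b hb => by
      simp only [List.mem_filter, P, decide_eq_true_eq] at ha hb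
      simp [le, ha.2, hb.2]
  have hsub : (l.filter P).Sublist ((l.mergeSort le).filter P) := by
    simpa [List.filter_filter] using
      (List.sublist_mergeSort trans total hfiber List.filter_sublist).filter P
  exact (hsub.eq_of_length ((List.mergeSort_perm l le).filter P).length_eq.symm).symm

theorem exists_mem_Icc_eq_of_dvd_of_sub_le_succ {f : ℕ → ℤ} {d c : ℤ} (hf : ∀ s, d ∣ f s)
    (hc : d ∣ c) (hstep : ∀ s, f s - d ≤ f (s + 1)) {a b : ℕ} (hab : a ≤ b) (ha : c ≤ f a)
    (hb : f b ≤ c) : ∃ s ∈ Set.Icc a b, f s = c := by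
  induction b, hab using Nat.le_induction with
  | base => exact ⟨a, ⟨le_rfl, le_rfl⟩, le_antisymm hb ha⟩
  | succ b hab ih =>
    by_cases hbc : f b ≤ c
    · obtain ⟨s, ⟨has, hsb⟩, hs⟩ := ih hbc
      exact ⟨s, ⟨has, hsb.trans b.le_succ⟩, hs⟩
    · have hdiff : c - f (b + 1) = 0 :=
        Int.eq_zero_of_abs_lt_dvd (dvd_sub hc (hf _))
          (abs_lt.mpr ⟨by linarith [hstep b], by linarith [hstep b]⟩)
      exact ⟨b + 1, ⟨hab.trans b.le_succ, le_rfl⟩, by linarith⟩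

section Level

variable (k n : ℕ) (p : List Bool)

theorem level_dvd : (n : ℤ) ∣ level k n p :=
  ⟨(k : ℤ) * p.count true - p.count false, by unfold level; ring⟩

theorem level_append_singleton (b : Bool) :
    level k n (p ++ [b]) = level k n p + if b then (k * n : ℤ) else -n := by
  cases b <;> simp [level, List.count_append] <;> ring

variable {k n p}

theorem IsDyck.level_eq_zero (hp : IsDyck k n p) : level k n p = 0 := by
  rw [level, hp.1, hp.2.1]
  push_cast
  ring

theorem level_take_succ {q : ℕ} (hq : q < p.length) :
    level k n (p.take (q + 1)) = level k n (p.take q) + if p[q] then (k * n : ℤ) else -n := by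
  rw [List.take_add_one, List.getElem?_eq_getElem hq]
  exact level_append_singleton k n _ _

theorem level_take_sub_le_succ (s : ℕ) :
    level k n (p.take s) - n ≤ level k n (p.take (s + 1)) := by
  rcases lt_or_ge s p.length with hs | hs
  · rw [level_take_succ hs]
    split <;> linarith [show (0 : ℤ) ≤ k * n by positivity]
  · rw [List.take_of_length_le hs, List.take_of_length_le (by omega)]
    linarith [(Int.natCast_nonneg n)]

theorem IsDyck.exists_level_take_eq_of_north (hp : IsDyck k n p) {q : ℕ} (hq : q < p.length)
    (hN : p[q] = true) (hpos : 0 < level k n (p.take q)) :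
    ∃ s, q < s ∧ s < p.length ∧ level k n (p.take s) = level k n (p.take q) := by
  have hup : level k n (p.take q) ≤ level k n (p.take (q + 1)) := by
    rw [level_take_succ hq, hN, if_pos rfl]
    linarith [show (0 : ℤ) ≤ k * n by positivity]
  have hend : level k n (p.take p.length) ≤ level k n (p.take q) := by
    rw [List.take_length, hp.level_eq_zero]
    exact hpos.le
  obtain ⟨s, ⟨hqs, hslen⟩, hs⟩ := exists_mem_Icc_eq_of_dvd_of_sub_le_succ
    (fun s => level_dvd k n (p.take s)) (level_dvd k n _) level_take_sub_le_succ hq hup hend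
  refine ⟨s, hqs, lt_of_le_of_ne hslen ?_, hs⟩
  rintro rfl
  rw [List.take_length, hp.level_eq_zero] at hs
  exact hpos.ne hs

end Level

section Sweep

variable {k n : ℕ} {p : List Bool}

def sweepLabels (k n : ℕ) (p : List Bool) : List (ℤ × Bool) :=
  (List.range p.length).reverse.map fun i => (level k n (p.take i), p.getD i true)

theorem getElem_sweepLabels {t : ℕ} (ht : t < (sweepLabels k n p).length) :
    (sweepLabels k n p)[t] =
      (level k n (p.take (p.length - 1 - t)), p.getD (p.length - 1 - t) true) := by
  simp [sweepLabels]

theorem length_sweepLabels : (sweepLabels k n p).length = p.length := by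
  simp [sweepLabels]

theorem IsDyck.snd_eq_false_of_find?_sweepLabels (hp : IsDyck k n p) {ℓ : ℤ} (hℓ : 0 < ℓ)
    {x : ℤ × Bool} (hx : (sweepLabels k n p).find? (fun a => decide (a.1 = ℓ)) = some x) :
    x.2 = false := by
  obtain ⟨hxℓ, t, ht, rfl, hbefore⟩ := List.find?_eq_some_iff_getElem.mp hx
  have htp : t < p.length := length_sweepLabels (k := k) (n := n) ▸ ht
  simp only [getElem_sweepLabels, decide_eq_true_eq] at hxℓ ⊢
  rw [List.getD_eq_getElem _ _ (by omega)]
  by_contra hN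
  obtain ⟨s, hqs, hsp, hs⟩ :=
    hp.exists_level_take_eq_of_north (by omega) (Bool.not_eq_false _ ▸ hN) (hxℓ ▸ hℓ)
  have := hbefore (p.length - 1 - s) (by omega)
  simp [getElem_sweepLabels, show p.length - 1 - (p.length - 1 - s) = s by omega, hs, hxℓ] at this

theorem sweep_eq_mergeSort :
    sweep k n p = (sweepLabels k n p).mergeSort fun a b => decide (a.1 ≤ b.1) :=
  rfl

theorem filter_sweep_fst_eq (ℓ : ℤ) :
    (sweep k n p).filter (fun a => decide (a.1 = ℓ)) =
      (sweepLabels k n p).filter (fun a => decide (a.1 = ℓ)) :=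
  List.filter_mergeSort_fiber Prod.fst _ ℓ

theorem sweep_fst_le_of_le {s t : ℕ} (hst : s ≤ t) (ht : t < (sweep k n p).length) :
    (sweep k n p)[s].1 ≤ (sweep k n p)[t].1 := by
  rcases hst.eq_or_lt with rfl | hlt
  · exact le_rfl
  · have hsorted : (sweep k n p).Pairwise fun a b => decide (a.1 ≤ b.1) :=
      List.pairwise_mergeSort
        (fun _ _ _ hab hbc => by simp only [decide_eq_true_eq] at *; exact hab.trans hbc)
        (fun a b => by simp [le_total]) _
    simpa using List.pairwise_iff_getElem.mp hsorted s t _ ht hlt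

theorem IsDyck.fst_nonneg_of_mem_sweep (hp : IsDyck k n p) {a : ℤ × Bool}
    (ha : a ∈ sweep k n p) : 0 ≤ a.1 := by
  simp only [sweep_eq_mergeSort, List.mem_mergeSort, sweepLabels, List.mem_map, List.mem_reverse,
    List.mem_range] at ha
  obtain ⟨q, hq, rfl⟩ := ha
  exact hp.2.2 q hq.le

theorem IsDyck.sweep_fst_succ_eq_of_snd (hp : IsDyck k n p) {j : ℕ}
    (hj : j + 1 < (sweep k n p).length) (hS : (sweep k n p)[j + 1].2 = true) :
    (sweep k n p)[j + 1].1 = (sweep k n p)[j].1 := by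
  refine le_antisymm ?_ (sweep_fst_le_of_le j.le_succ hj)
  by_contra! hlt
  set ℓ := (sweep k n p)[j + 1].1
  have hfind :
      (sweepLabels k n p).find? (fun a => decide (a.1 = ℓ)) = some (sweep k n p)[j + 1] := by
    rw [← List.head?_filter, ← filter_sweep_fst_eq, List.head?_filter,
      List.find?_eq_some_iff_getElem]
    refine ⟨by simp [ℓ], j + 1, hj, rfl, fun t ht => ?_⟩
    have := sweep_fst_le_of_le (Nat.le_of_lt_succ ht) (by omega : j < (sweep k n p).length)
    simp only [Bool.not_eq_true', decide_eq_false_iff_not]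
    exact (this.trans_lt hlt).ne
  have hℓ : 0 < ℓ := (hp.fst_nonneg_of_mem_sweep (List.getElem_mem _)).trans_lt hlt
  simp [hp.snd_eq_false_of_find?_sweepLabels hℓ hfind] at hS

end Sweep

theorem stmt4_general (k n : ℕ) (p : List Bool) (hp : IsDyck k n p)
    (m : ℤ) (i : ℕ) (hi : i + 2 < (sweep k n p).length)
    (hW : (sweep k n p).getD i (0, true) = (m * n, false))
    (hS1 : ((sweep k n p).getD (i + 1) (0, true)).2 = true)
    (hS2 : ((sweep k n p).getD (i + 2) (0, true)).2 = true) :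
    ((sweep k n p).getD (i + 1) (0, true)).1 = m * n ∧
      ((sweep k n p).getD (i + 2) (0, true)).1 = m * n := by
  rw [List.getD_eq_getElem _ _ (by omega)] at hW hS1 hS2 ⊢
  rw [List.getD_eq_getElem _ _ (by omega)]
  have h1 := hp.sweep_fst_succ_eq_of_snd (j := i) (by omega) hS1
  have h2 := hp.sweep_fst_succ_eq_of_snd (j := i + 1) hi hS2
  rw [hW] at h1
  exact ⟨h1, h2.trans h1⟩

/-- Theorem 2.1 (full): in the sorted sweep-map output of a `(kn,n)`-Dyck path,
if `σᵢ = W` with `τᵢ = m·n` and `σᵢ₊₁ = σᵢ₊₂ = S`, then `τᵢ₊₁ = τᵢ₊₂ = m·n`. -/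
theorem stmt4 (k n : ℕ) (hn : 0 < n) (p : List Bool) (hp : IsDyck k n p)
    (m : ℤ) (i : ℕ) (hi : i + 2 < (sweep k n p).length)
    (hW : (sweep k n p).getD i (0, true) = (m * n, false))
    (hS1 : ((sweep k n p).getD (i + 1) (0, true)).2 = true)
    (hS2 : ((sweep k n p).getD (i + 2) (0, true)).2 = true) :
    ((sweep k n p).getD (i + 1) (0, true)).1 = m * n ∧
      ((sweep k n p).getD (i + 2) (0, true)).1 = m * n :=
  stmt4_general k n p hp m i hi hW hS1 hS2
end

section
/- The inversion algorithm recovers the level sequence: given the S/W output word σ of the sweep map on a (kn,n)-Dyck path, the sequence τ produced by setting τ_1 = 0, setting τ_i = τ_{i−1} when σ_i = S, and for σ_i = W assigning levels by the counting rule (difference x of entries at level τ_{i−1} and S's at level τ_{i−1}−kn determines whether the next x W's get level τ_{i−1}+n or τ_{i−1}), equals the true sorted level sequence of the path. -/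
/-- Assign level `v` to the positions of the next `x` `W`'s of `σ` among the
remaining positions `idxs`. -/
def assignW (σ : List Bool) (v : ℤ) : List ℕ → ℕ → Array (Option ℤ) → Array (Option ℤ)
  | _, 0, A => A
  | [], _ + 1, A => A
  | i :: rest, x + 1, A =>
      if σ.getD i true = false then assignW σ v rest x (A.set! i (some v))
      else assignW σ v rest (x + 1) A

/-- One step of the inversion algorithm at position `i` (0-indexed). -/
def invertStep (k n : ℕ) (σ : List Bool) (A : Array (Option ℤ)) (i : ℕ) :
    Array (Option ℤ) :=
  if (A.getD i none).isSome then A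
  else
    match A.getD (i - 1) none with
    | none => A
    | some t =>
      if σ.getD i true = true then A.set! i (some t)
      else
        let cntEq : ℤ := A.toList.countP (fun a => decide (a = some t))
        let cntS : ℤ := (List.range σ.length).countP
          (fun j => decide (A.getD j none = some (t - k * n)) &&
            decide (σ.getD j true = true))
        let x : ℤ := cntEq - cntS
        if 0 < x then assignW σ (t + n) ((List.range σ.length).drop i) x.toNat A
        else assignW σ t ((List.range σ.length).drop i) (-x).toNat A

/-- The inversion algorithm of Theorem 2.2: `τ₁ = 0`, then loop over the remaining
positions, filling in levels by the counting rule. -/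
def invert (k n : ℕ) (σ : List Bool) : Array (Option ℤ) :=
  ((List.range σ.length).drop 1).foldl (invertStep k n σ)
    ((Array.replicate σ.length (none : Option ℤ)).set! 0 (some 0))

/-!
The inversion algorithm keeps an invariant: just before it treats position `i`, the array holds
the true levels of the positions before `i` and of the `W`'s at the level `t` of position
`i - 1`, and nothing else. The sorted levels rise in steps of `n`, because an east step lowers
the level by exactly `n` and the path returns to `0`; and the first entry at a new level is a
`W`, because ties are broken right to left and the rightmost point at a positive level is left
by an east step. So an unassigned `S` stays at level `t`, while an unassigned `W` opens level
`t + n`. In that case the counting rule returns exactly the number of `W`'s at level `t + n`: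
every point at level `t` is entered by a north step from `t - kn` or by an east step from
`t + n`, and all entries at levels up to `t` are already known.
-/

namespace List

lemma mem_drop_range {N i j : ℕ} : j ∈ (range N).drop i ↔ i ≤ j ∧ j < N := by
  simp only [range_eq_range', drop_range', mem_range'_1]
  omega

lemma countP_drop_range (N i : ℕ) (f : ℕ → Bool) :
    ((range N).drop i).countP f = (range N).countP fun j => decide (i ≤ j) && f j := by
  have hprefix : ((range N).take i).countP (fun j => decide (i ≤ j) && f j) = 0 := by
    refine countP_eq_zero.2 fun j hj => ?_
    simp only [take_range, mem_range] at hj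
    simp only [Bool.and_eq_true, decide_eq_true_eq, not_and]
    omega
  conv_rhs => rw [← take_append_drop i (range N)]
  rw [countP_append, hprefix, Nat.zero_add]
  exact countP_congr fun j hj => by simp [(mem_drop_range.1 hj).1]

lemma countP_range_length {α : Type*} (l : List α) (q : α → Bool) (f : ℕ → Bool)
    (hf : ∀ j (hj : j < l.length), f j = q l[j]) :
    (range l.length).countP f = l.countP q := by
  induction l generalizing f with
  | nil => simp
  | cons a t ih =>
    rw [length_cons, range_succ_eq_map, countP_cons, countP_map, countP_cons,
      ih (f ∘ Nat.succ) fun j hj => hf (j + 1) (by simpa using hj)]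
    simp [hf 0 (by simp)]

theorem filter_mergeSort_key_eq {α β : Type*} [LinearOrder β] (f : α → β) (l : List α)
    (c : β) : (l.mergeSort fun a b => decide (f a ≤ f b)).filter (fun a => f a = c) =
      l.filter (fun a => f a = c) := by
  have trans : ∀ a b d : α, decide (f a ≤ f b) → decide (f b ≤ f d) → decide (f a ≤ f d) := by
    simpa using fun _ _ _ => le_trans
  have total : ∀ a b : α, (decide (f a ≤ f b) || decide (f b ≤ f a)) := by simp [le_total]
  have hfiber : (l.filter fun a => f a = c).Pairwise fun a b => decide (f a ≤ f b) :=
    pairwise_iff_getElem.2 fun i j hi hj _ => by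
      have hi' := (mem_filter.1 (getElem_mem hi)).2
      have hj' := (mem_filter.1 (getElem_mem hj)).2
      simp only [decide_eq_true_eq] at hi' hj' ⊢
      rw [hi', hj']
  have hsub :=
    (sublist_mergeSort trans total hfiber (filter_sublist (l := l))).filter fun a => f a = c
  rw [filter_filter, filter_congr fun a _ => Bool.and_self _] at hsub
  refine (hsub.eq_of_length ?_).symm
  rw [← countP_eq_length_filter, ← countP_eq_length_filter, (mergeSort_perm l _).countP_eq]

lemma countP_or_of_disjoint {α : Type*} (l : List α) (q r : α → Bool)
    (h : ∀ a ∈ l, ¬(q a ∧ r a)) : l.countP (fun a => q a || r a) = l.countP q + l.countP r := by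
  induction l with
  | nil => simp
  | cons a t ih =>
    simp only [countP_cons, ih fun b hb => h b (mem_cons_of_mem a hb)]
    have := h a mem_cons_self
    by_cases hq : q a <;> by_cases hr : r a <;> simp_all <;> omega

lemma countP_range_succ_eq (N : ℕ) (f : ℕ → Bool) (h : f 0 = f N) :
    (range N).countP (fun i => f (i + 1)) = (range N).countP f := by
  have h1 := congrArg (countP f) (range_succ (n := N))
  rw [range_succ_eq_map] at h1
  simp only [countP_cons, countP_append, countP_map] at h1
  rw [h] at h1
  simpa [Function.comp_def] using h1

end List

namespace SweepInversion

open List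

section Inversion

theorem assignW_zero (σ : List Bool) (v : ℤ) (idxs : List ℕ) (A : Array (Option ℤ)) :
    assignW σ v idxs 0 A = A := by
  cases idxs <;> rfl

theorem assignW_cons_of_S {σ : List Bool} {i : ℕ} (hS : σ.getD i true ≠ false) (v : ℤ)
    (rest : List ℕ) (c : ℕ) (A : Array (Option ℤ)) :
    assignW σ v (i :: rest) c A = assignW σ v rest c A := by
  cases c with
  | zero => rw [assignW_zero, assignW_zero]
  | succ c => rw [assignW, if_neg hS]

lemma mapIdx_ite_eq_self {α : Type*} (l : List α) (Q : ℕ → Prop) [DecidablePred Q] (b : α)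
    (hQ : ∀ j, ¬Q j) : l.mapIdx (fun j a => if Q j then b else a) = l :=
  ext_getElem (by simp) fun j _ _ => by simp [hQ j]

/-- When the positions satisfying `P` form a prefix of `idxs`, asking for as many `W`'s as
there are `W`'s satisfying `P` assigns exactly those. -/
theorem toList_assignW (σ : List Bool) (v : ℤ) (P : ℕ → Prop) [DecidablePred P] :
    ∀ (idxs : List ℕ) (A : Array (Option ℤ)), idxs.Pairwise (fun a b => P b → P a) →
      (assignW σ v idxs (idxs.countP fun j => !σ.getD j true && decide (P j)) A).toList =
        A.toList.mapIdx fun j a => if j ∈ idxs ∧ σ.getD j true = false ∧ P j then some v else a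
  | [], A, _ => by
    rw [countP_nil, assignW_zero, mapIdx_ite_eq_self _ _ _ fun j h => not_mem_nil h.1]
  | i :: rest, A, hpre => by
    obtain ⟨hhead, hrest⟩ := pairwise_cons.1 hpre
    by_cases hWi : σ.getD i true = false
    · have hWi' : σ[i]?.getD true = false := by simpa using hWi
      by_cases hPi : P i
      · rw [countP_cons_of_pos (by simp [hWi', hPi]), assignW, if_pos hWi,
          toList_assignW σ v P rest _ hrest, Array.set!_eq_setIfInBounds,
          Array.toList_setIfInBounds]
        refine ext_getElem (by simp) fun j _ _ => ?_
        by_cases hji : j = i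
        · subst hji; simp [hWi', hPi]
        · simp [Ne.symm hji, hji]
      · have hnone : ∀ j ∈ i :: rest, ¬P j := by
          simpa [hPi] using fun j hj hPj => hPi (hhead j hj hPj)
        rw [countP_eq_zero.2 fun j hj => by simp [hnone j hj], assignW_zero,
          mapIdx_ite_eq_self _ _ _ fun j h => hnone j h.1 h.2.2]
    · have hWi' : ¬σ[i]?.getD true = false := by simpa using hWi
      have hQ : ∀ j, (j ∈ i :: rest ∧ σ.getD j true = false ∧ P j) ↔
          (j ∈ rest ∧ σ.getD j true = false ∧ P j) := by
        intro j
        by_cases hji : j = i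
        · subst hji; simp [hWi']
        · simp [hji]
      simp only [hQ]
      rw [countP_cons_of_neg (by simp [hWi']), assignW_cons_of_S hWi,
        toList_assignW σ v P rest _ hrest]

def levelAt (s : List (ℤ × Bool)) (j : ℕ) : ℤ := (s.getD j (0, true)).1

def labelAt (s : List (ℤ × Bool)) (j : ℕ) : Bool := (s.getD j (0, true)).2

lemma levelAt_of_lt {s : List (ℤ × Bool)} {j : ℕ} (hj : j < s.length) :
    levelAt s j = s[j].1 := by
  rw [levelAt, getD_eq_getElem _ _ hj]

lemma labelAt_of_lt {s : List (ℤ × Bool)} {j : ℕ} (hj : j < s.length) :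
    labelAt s j = s[j].2 := by
  rw [labelAt, getD_eq_getElem _ _ hj]

lemma getD_map_snd (s : List (ℤ × Bool)) (j : ℕ) :
    (s.map Prod.snd).getD j true = labelAt s j := by
  simp only [labelAt, getD_eq_getElem?_getD, getElem?_map]
  cases s[j]? <;> rfl

/-- The properties of the sweep output `(τᵢ, σᵢ)` of a `(kn,n)`-Dyck path that the inversion
algorithm relies on. -/
structure IsSweepSequence (k n : ℕ) (s : List (ℤ × Bool)) : Prop where
  monotone : MonotoneOn (levelAt s) (Set.Iio s.length)
  levelAt_zero : 0 < s.length → levelAt s 0 = 0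
  labelAt_of_levelAt_eq_zero : ∀ j < s.length, levelAt s j = 0 → labelAt s j = true
  levelAt_succ : ∀ m, m + 1 < s.length → levelAt s (m + 1) = levelAt s m ∨
    (levelAt s (m + 1) = levelAt s m + n ∧ labelAt s (m + 1) = false)
  countP_level : ∀ t : ℤ, s.countP (fun a => a.1 = t) =
    s.countP (· = (t - k * n, true)) + s.countP (· = (t + n, false))

def IsKnown (s : List (ℤ × Bool)) (i j : ℕ) : Prop :=
  j < i ∨ (labelAt s j = false ∧ levelAt s j = levelAt s (i - 1))

instance (s : List (ℤ × Bool)) (i j : ℕ) : Decidable (IsKnown s i j) :=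
  inferInstanceAs (Decidable (_ ∨ _))

/-- The array held by the inversion algorithm just before it treats position `i`. -/
def partialLevels (s : List (ℤ × Bool)) (i : ℕ) : List (Option ℤ) :=
  (range s.length).map fun j => if IsKnown s i j then some (levelAt s j) else none

variable {k n : ℕ} {s : List (ℤ × Bool)} {i : ℕ} {A : Array (Option ℤ)}

@[simp] lemma length_partialLevels : (partialLevels s i).length = s.length := by
  simp [partialLevels]

lemma getElem_partialLevels {j : ℕ} (hj : j < (partialLevels s i).length) :
    (partialLevels s i)[j] = if IsKnown s i j then some (levelAt s j) else none := by
  simp [partialLevels]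

lemma getD_partialLevels {j : ℕ} (hj : j < s.length) :
    (partialLevels s i).getD j none = if IsKnown s i j then some (levelAt s j) else none := by
  rw [getD_eq_getElem _ _ (by simpa using hj), getElem_partialLevels]

lemma partialLevels_congr {i' : ℕ} (h : ∀ j < s.length, IsKnown s i j ↔ IsKnown s i' j) :
    partialLevels s i = partialLevels s i' :=
  map_congr_left fun j hj => by simp only [h j (mem_range.1 hj)]

lemma lt_of_levelAt_lt (hmono : MonotoneOn (levelAt s) (Set.Iio s.length)) {j : ℕ}
    (hj : j < s.length) (hlt : levelAt s j < levelAt s i) : j < i :=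
  Nat.lt_of_not_le fun hij => absurd (hmono (hij.trans_lt hj) hj hij) (not_le.2 hlt)

lemma isKnown_succ_iff_of_levelAt_eq (h : levelAt s i = levelAt s (i - 1)) (j : ℕ) :
    IsKnown s (i + 1) j ↔ j = i ∨ IsKnown s i j := by
  simp only [IsKnown, Nat.add_sub_cancel, h, Nat.lt_succ_iff_lt_or_eq]
  tauto

lemma isKnown_succ_iff_of_lt (hmono : MonotoneOn (levelAt s) (Set.Iio s.length))
    (hlt : levelAt s (i - 1) < levelAt s i) (hW : labelAt s i = false) {j : ℕ}
    (hj : j < s.length) :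
    IsKnown s (i + 1) j ↔ IsKnown s i j ∨
      (i ≤ j ∧ labelAt s j = false ∧ levelAt s j = levelAt s i) := by
  have hbefore : levelAt s j = levelAt s (i - 1) → j < i := fun h =>
    lt_of_levelAt_lt hmono hj (h ▸ hlt)
  simp only [IsKnown, Nat.add_sub_cancel, Nat.lt_succ_iff_lt_or_eq]
  constructor
  · rintro ((h | rfl) | h)
    · exact Or.inl (Or.inl h)
    · exact Or.inr ⟨le_rfl, hW, rfl⟩
    · by_cases hji : j < i
      · exact Or.inl (Or.inl hji)
      · exact Or.inr ⟨Nat.le_of_not_lt hji, h⟩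
  · rintro ((h | h) | h)
    · exact Or.inl (Or.inl h)
    · exact Or.inl (Or.inl (hbefore h.2))
    · exact Or.inr h.2

lemma countP_partialLevels_eq_some (hmono : MonotoneOn (levelAt s) (Set.Iio s.length))
    {t : ℤ} (ht : t < levelAt s i) :
    (partialLevels s i).countP (· = some t) = s.countP (·.1 = t) := by
  rw [partialLevels, countP_map]
  refine countP_range_length s _ _ fun j hj => ?_
  have hk : s[j].1 = t → IsKnown s i j := fun h =>
    Or.inl (lt_of_levelAt_lt hmono hj (by rwa [levelAt_of_lt hj, h]))
  simp only [Function.comp_apply, levelAt_of_lt hj]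
  by_cases hjt : s[j].1 = t
  · simp [hk hjt, hjt]
  · by_cases hknown : IsKnown s i j <;> simp [hknown, hjt]

lemma countP_range_partialLevels_eq_some_S (hmono : MonotoneOn (levelAt s) (Set.Iio s.length))
    {u : ℤ} (hu : u < levelAt s i) :
    (range s.length).countP (fun j => decide ((partialLevels s i).getD j none = some u) &&
      decide (labelAt s j = true)) = s.countP (· = (u, true)) := by
  refine countP_range_length s _ _ fun j hj => ?_
  have hk : s[j].1 = u → IsKnown s i j := fun h =>
    Or.inl (lt_of_levelAt_lt hmono hj (by rwa [levelAt_of_lt hj, h]))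
  rw [getD_partialLevels hj, levelAt_of_lt hj, labelAt_of_lt hj]
  by_cases hju : s[j].1 = u
  · simp [hk hju, hju, Prod.ext_iff]
  · by_cases hknown : IsKnown s i j <;> simp [hknown, hju, Prod.ext_iff]

lemma countP_drop_range_W (hmono : MonotoneOn (levelAt s) (Set.Iio s.length))
    (hiN : i < s.length) (hlt : levelAt s (i - 1) < levelAt s i) :
    ((range s.length).drop i).countP (fun j => !labelAt s j && decide (levelAt s j = levelAt s i)) =
      s.countP (· = (levelAt s i, false)) := by
  rw [countP_drop_range]
  refine countP_range_length s _ _ fun j hj => ?_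
  have hbefore : j < i → levelAt s j < levelAt s i := fun hji =>
    (hmono (by omega : j < s.length) (by omega : i - 1 < s.length) (by omega)).trans_lt hlt
  rw [levelAt_of_lt hj] at hbefore
  rw [labelAt_of_lt hj, levelAt_of_lt hj]
  by_cases hij : i ≤ j
  · simp [hij, Prod.ext_iff, and_comm]
  · simp [hij, Prod.ext_iff, (hbefore (by omega)).ne]

lemma pairwise_drop_range_levelAt_eq (hmono : MonotoneOn (levelAt s) (Set.Iio s.length)) :
    ((range s.length).drop i).Pairwise
      (fun a b => levelAt s b = levelAt s i → levelAt s a = levelAt s i) := by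
  refine pairwise_iff_getElem.2 fun a b ha hb hab hb' => ?_
  simp only [length_drop, length_range] at ha hb
  simp only [getElem_drop, getElem_range] at hb' ⊢
  have := hmono (by omega : i < s.length) (by omega : i + a < s.length) (by omega)
  have := hmono (by omega : i + a < s.length) (by omega : i + b < s.length) (by omega)
  omega

lemma mapIdx_partialLevels_of_lt (hmono : MonotoneOn (levelAt s) (Set.Iio s.length))
    (hlt : levelAt s (i - 1) < levelAt s i) (hW : labelAt s i = false) :
    (partialLevels s i).mapIdx (fun j a =>
      if j ∈ (range s.length).drop i ∧ labelAt s j = false ∧ levelAt s j = levelAt s i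
      then some (levelAt s i) else a) = partialLevels s (i + 1) := by
  refine ext_getElem (by simp) fun j _ hj => ?_
  simp only [length_partialLevels] at hj
  simp only [getElem_mapIdx, getElem_partialLevels, mem_drop_range,
    isKnown_succ_iff_of_lt hmono hlt hW hj]
  by_cases hnew : i ≤ j ∧ labelAt s j = false ∧ levelAt s j = levelAt s i
  · simp [hnew, hj]
  · simp only [hnew, or_false]
    rw [if_neg (by tauto)]

lemma getD_eq_getD_partialLevels (hA : A.toList = partialLevels s i) (j : ℕ) :
    A.getD j none = (partialLevels s i).getD j none := by
  rw [Array.getD_eq_getD_getElem?, ← Array.getElem?_toList, hA, getD_eq_getElem?_getD]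

lemma getD_prev_of_toList_eq (hA : A.toList = partialLevels s i) (hi : 1 ≤ i)
    (hiN : i < s.length) : A.getD (i - 1) none = some (levelAt s (i - 1)) := by
  rw [getD_eq_getD_partialLevels hA, getD_partialLevels (by omega),
    if_pos (show IsKnown s i (i - 1) from Or.inl (by omega))]

lemma getD_of_not_isKnown (hA : A.toList = partialLevels s i) (hiN : i < s.length)
    (hk : ¬IsKnown s i i) : A.getD i none = none := by
  rw [getD_eq_getD_partialLevels hA, getD_partialLevels hiN, if_neg hk]

lemma invertStep_of_isKnown (hA : A.toList = partialLevels s i) (hiN : i < s.length)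
    (hk : IsKnown s i i) :
    (invertStep k n (s.map Prod.snd) A i).toList = partialLevels s (i + 1) := by
  have hlev : levelAt s i = levelAt s (i - 1) := (hk.resolve_left (lt_irrefl i)).2
  have hsome : A.getD i none = some (levelAt s i) := by
    rw [getD_eq_getD_partialLevels hA, getD_partialLevels hiN, if_pos hk]
  rw [invertStep, hsome, Option.isSome_some, if_pos rfl, hA]
  exact partialLevels_congr fun j _ => by
    rw [isKnown_succ_iff_of_levelAt_eq hlev]
    exact ⟨Or.inr, fun h => h.elim (· ▸ hk) id⟩

lemma invertStep_of_S (hA : A.toList = partialLevels s i) (hi : 1 ≤ i) (hiN : i < s.length)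
    (hS : labelAt s i = true) (hlev : levelAt s i = levelAt s (i - 1)) :
    (invertStep k n (s.map Prod.snd) A i).toList = partialLevels s (i + 1) := by
  have hk : ¬IsKnown s i i := by rintro (h | h) <;> simp_all
  rw [invertStep, getD_of_not_isKnown hA hiN hk, getD_prev_of_toList_eq hA hi hiN]
  simp only [Option.isSome_none, Bool.false_eq_true, if_false, getD_map_snd, hS, if_true,
    Array.set!_eq_setIfInBounds, Array.toList_setIfInBounds, hA]
  refine ext_getElem (by simp) fun j _ _ => ?_
  rw [getElem_set, getElem_partialLevels, getElem_partialLevels]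
  simp only [isKnown_succ_iff_of_levelAt_eq hlev]
  by_cases hji : i = j
  · subst hji; simp [hlev]
  · simp [hji, Ne.symm hji]

/-- At a new level `t + n` the counting rule gives `x = #(t) - #(t - kn, S) = #(t + n, W)`,
so the `W`'s at level `t + n` are assigned at once. -/
lemma invertStep_of_lt (h : IsSweepSequence k n s) (hA : A.toList = partialLevels s i)
    (hi : 1 ≤ i) (hiN : i < s.length) (hW : labelAt s i = false)
    (hnew : levelAt s i = levelAt s (i - 1) + n) (hlt : levelAt s (i - 1) < levelAt s i) :
    (invertStep k n (s.map Prod.snd) A i).toList = partialLevels s (i + 1) := by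
  have hk : ¬IsKnown s i i := by rintro (h | h) <;> simp_all
  rw [invertStep, getD_of_not_isKnown hA hiN hk, getD_prev_of_toList_eq hA hi hiN]
  simp only [Option.isSome_none, Bool.false_eq_true, if_false, getD_map_snd, hW, length_map,
    getD_eq_getD_partialLevels hA]
  have hkn : (0 : ℤ) ≤ k * n := by positivity
  rw [hA, countP_partialLevels_eq_some h.monotone hlt,
    countP_range_partialLevels_eq_some_S h.monotone (by omega), h.countP_level, ← hnew]
  have hpos : 0 < s.countP (· = (levelAt s i, false)) :=
    countP_pos_iff.2 ⟨s[i], getElem_mem hiN, by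
      simp [Prod.ext_iff, ← levelAt_of_lt hiN, ← labelAt_of_lt hiN, hW]⟩
  have hcount : ((range s.length).drop i).countP (fun j =>
      !(s.map Prod.snd).getD j true && decide (levelAt s j = levelAt s i)) =
        s.countP (· = (levelAt s i, false)) := by
    simpa only [getD_map_snd] using countP_drop_range_W h.monotone hiN hlt
  set wS := s.countP (· = (levelAt s (i - 1) - k * n, true))
  set wW := s.countP (· = (levelAt s i, false))
  rw [if_pos (by push_cast; omega), show ((wS + wW : ℕ) - (wS : ℤ)).toNat = wW by omega,
    ← hcount, toList_assignW _ _ _ _ _ (pairwise_drop_range_levelAt_eq h.monotone), hA]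
  simpa only [getD_map_snd] using mapIdx_partialLevels_of_lt h.monotone hlt hW

theorem invertStep_partialLevels (h : IsSweepSequence k n s)
    (hA : A.toList = partialLevels s i) (hi : 1 ≤ i) (hiN : i < s.length) :
    (invertStep k n (s.map Prod.snd) A i).toList = partialLevels s (i + 1) := by
  by_cases hk : IsKnown s i i
  · exact invertStep_of_isKnown hA hiN hk
  have hstep := h.levelAt_succ (i - 1) (by omega)
  rw [Nat.sub_add_cancel hi] at hstep
  by_cases hlev : levelAt s i = levelAt s (i - 1)
  · refine invertStep_of_S hA hi hiN ?_ hlev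
    by_contra hS
    exact hk (Or.inr ⟨by simpa using hS, hlev⟩)
  · obtain ⟨hnew, hW⟩ := hstep.resolve_left hlev
    exact invertStep_of_lt h hA hi hiN hW hnew
      (lt_of_le_of_ne (h.monotone (by omega : i - 1 < s.length) hiN (Nat.sub_le i 1))
        (Ne.symm hlev))

theorem foldl_invertStep (h : IsSweepSequence k n s) :
    ∀ (m i : ℕ) (A : Array (Option ℤ)), 1 ≤ i → i + m = s.length →
      A.toList = partialLevels s i →
      ((range' i m).foldl (invertStep k n (s.map Prod.snd)) A).toList = partialLevels s s.length
  | 0, i, A, _, him, hA => by rw [range'_zero, foldl_nil, hA, ← him, Nat.add_zero]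
  | m + 1, i, A, hi, him, hA => by
    rw [range'_succ, foldl_cons]
    exact foldl_invertStep h m (i + 1) _ (by omega) (by omega)
      (invertStep_partialLevels h hA hi (by omega))

lemma partialLevels_one (h : IsSweepSequence k n s) (hs : 0 < s.length) :
    ((Array.replicate s.length none).set! 0 (some 0)).toList = partialLevels s 1 := by
  refine ext_getElem (by simp) fun j _ hj => ?_
  simp only [length_partialLevels] at hj
  simp only [Array.set!_eq_setIfInBounds, Array.toList_setIfInBounds, Array.toList_replicate,
    getElem_set, getElem_replicate, getElem_partialLevels]
  by_cases hj0 : j = 0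
  · subst hj0; simp [IsKnown, h.levelAt_zero hs]
  · rw [if_neg (Ne.symm hj0), if_neg]
    rintro (hj1 | ⟨hW, hlev⟩)
    · omega
    · rw [Nat.sub_self, h.levelAt_zero hs] at hlev
      simp [h.labelAt_of_levelAt_eq_zero j hj hlev] at hW

lemma partialLevels_length : partialLevels s s.length = s.map fun a => some a.1 :=
  ext_getElem (by simp) fun j hj _ => by
    simp only [length_partialLevels] at hj
    simp [getElem_partialLevels, IsKnown, hj, levelAt_of_lt hj]

theorem invert_eq_of_isSweepSequence (h : IsSweepSequence k n s) :
    (invert k n (s.map Prod.snd)).toList = s.map fun a => some a.1 := by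
  rcases Nat.eq_zero_or_pos s.length with hs | hs
  · simp [eq_nil_of_length_eq_zero hs, invert]
  rw [invert, length_map, range_eq_range', drop_range', foldl_invertStep h _ 1 _ le_rfl
    (by omega) (partialLevels_one h hs), partialLevels_length]

end Inversion

section SweepMap

variable {k n : ℕ} {p : List Bool}

lemma level_take_zero : level k n (p.take 0) = 0 := by simp [level]

lemma level_of_isDyck (hp : IsDyck k n p) : level k n (p.take p.length) = 0 := by
  rw [take_length, level, hp.1, hp.2.1]
  push_cast
  ring

lemma level_take_succ {i : ℕ} (hi : i < p.length) :
    level k n (p.take (i + 1)) =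
      level k n (p.take i) + if p.getD i true then (k * n : ℤ) else -(n : ℤ) := by
  rw [take_add_one, getElem?_eq_getElem hi, getD_eq_getElem _ _ hi, level, level,
    Option.toList_some, count_append, count_append]
  cases p[i] <;> simp <;> ring

lemma dvd_level (q : List Bool) : (n : ℤ) ∣ level k n q :=
  ⟨k * q.count true - q.count false, by rw [level]; ring⟩

/-- East steps lower the level by exactly `n`, so a descent through multiples of `n`
from `≥ v` to `< v` passes through `v`. -/
lemma exists_level_eq_of_le_of_lt {v : ℤ} (hv : (n : ℤ) ∣ v) {a : ℕ} :
    ∀ b, a ≤ b → b ≤ p.length → v ≤ level k n (p.take a) → level k n (p.take b) < v →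
      ∃ c, a ≤ c ∧ c < b ∧ level k n (p.take c) = v
  | 0, hab, _, ha, hb => by
    obtain rfl : a = 0 := by omega
    exact absurd ha (not_le.2 hb)
  | b + 1, hab, hbp, ha, hb => by
    rcases Nat.lt_succ_iff_lt_or_eq.1 (Nat.lt_succ_of_le hab) with hab | rfl
    · by_cases hlow : level k n (p.take b) < v
      · obtain ⟨c, hac, hcb, hc⟩ :=
          exists_level_eq_of_le_of_lt hv b (by omega) (by omega) ha hlow
        exact ⟨c, hac, by omega, hc⟩
      · refine ⟨b, by omega, by omega, ?_⟩
        have hstep := level_take_succ (k := k) (n := n) (show b < p.length by omega)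
        have hkn : (0 : ℤ) ≤ k * n := by positivity
        have hd : (n : ℤ) ∣ level k n (p.take b) - v := dvd_sub (dvd_level _) hv
        split_ifs at hstep <;>
          linarith [Int.eq_zero_of_dvd_of_nonneg_of_lt (by linarith) (by linarith) hd]
    · exact absurd ha (not_le.2 (by omega))

def sweepEntry (k n : ℕ) (p : List Bool) (i : ℕ) : ℤ × Bool :=
  (level k n (p.take i), p.getD i true)

def sweepInput (k n : ℕ) (p : List Bool) : List (ℤ × Bool) :=
  (range p.length).reverse.map (sweepEntry k n p)

@[simp] lemma sweepEntry_fst (i : ℕ) : (sweepEntry k n p i).1 = level k n (p.take i) := rfl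

@[simp] lemma sweepEntry_snd (i : ℕ) : (sweepEntry k n p i).2 = p.getD i true := rfl

lemma sweep_eq_mergeSort :
    sweep k n p = (sweepInput k n p).mergeSort fun a b => decide (a.1 ≤ b.1) := rfl

lemma sweep_perm : (sweep k n p).Perm (sweepInput k n p) := mergeSort_perm _ _

@[simp] lemma length_sweep : (sweep k n p).length = p.length := by
  simp [sweep_perm.length_eq, sweepInput]

lemma mem_sweep {a : ℤ × Bool} : a ∈ sweep k n p ↔ ∃ i < p.length, sweepEntry k n p i = a := by
  simp [sweep_perm.mem_iff, sweepInput]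

lemma exists_sweepEntry {r : ℕ} (hr : r < (sweep k n p).length) :
    ∃ i < p.length, sweepEntry k n p i = (sweep k n p)[r] :=
  mem_sweep.1 (getElem_mem hr)

lemma exists_eq_sweepEntry {i : ℕ} (hi : i < p.length) :
    ∃ r, ∃ hr : r < (sweep k n p).length, (sweep k n p)[r] = sweepEntry k n p i :=
  getElem_of_mem (mem_sweep.2 ⟨i, hi, rfl⟩)

lemma countP_sweep (q : ℤ × Bool → Bool) :
    (sweep k n p).countP q = (range p.length).countP fun i => q (sweepEntry k n p i) := by
  rw [sweep_perm.countP_eq, sweepInput, countP_map, (reverse_perm _).countP_eq]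
  rfl

lemma monotoneOn_levelAt_sweep :
    MonotoneOn (levelAt (sweep k n p)) (Set.Iio (sweep k n p).length) := by
  intro a _ b hb hab
  rcases hab.lt_or_eq with hab | rfl
  · have hsorted := pairwise_mergeSort (le := fun a b : ℤ × Bool => decide (a.1 ≤ b.1))
      (by simpa using fun _ _ _ => le_trans) (by simp [le_total]) (sweepInput k n p)
    rw [← sweep_eq_mergeSort] at hsorted
    rw [levelAt_of_lt (hab.trans (Set.mem_Iio.1 hb)), levelAt_of_lt hb]
    simpa using pairwise_iff_getElem.1 hsorted a b _ hb hab
  · exact le_rfl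

lemma levelAt_sweep_nonneg (hp : IsDyck k n p) {r : ℕ} (hr : r < (sweep k n p).length) :
    0 ≤ levelAt (sweep k n p) r := by
  obtain ⟨i, hi, he⟩ := exists_sweepEntry hr
  rw [levelAt_of_lt hr, ← he]
  exact hp.2.2 i hi.le

lemma find?_sweepInput (ℓ : ℤ) :
    (sweepInput k n p).find? (·.1 = ℓ) = (sweep k n p).find? (·.1 = ℓ) := by
  rw [← head?_filter, ← head?_filter, sweep_eq_mergeSort,
    filter_mergeSort_key_eq (fun a : ℤ × Bool => a.1)]

lemma levelAt_sweep_zero (hp : IsDyck k n p) (hs : 0 < (sweep k n p).length) :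
    levelAt (sweep k n p) 0 = 0 := by
  obtain ⟨r, hr, he⟩ := exists_eq_sweepEntry (k := k) (n := n) (by simpa using hs)
  have hle := monotoneOn_levelAt_sweep hs hr (Nat.zero_le r)
  rw [levelAt_of_lt hr, he, sweepEntry, level_take_zero] at hle
  exact le_antisymm hle (levelAt_sweep_nonneg hp hs)

lemma labelAt_sweep_of_levelAt_eq_zero (hn : 0 < n) (hp : IsDyck k n p) {r : ℕ}
    (hr : r < (sweep k n p).length) (h0 : levelAt (sweep k n p) r = 0) :
    labelAt (sweep k n p) r = true := by
  obtain ⟨i, hi, he⟩ := exists_sweepEntry hr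
  rw [levelAt_of_lt hr, ← he, sweepEntry_fst] at h0
  rw [labelAt_of_lt hr, ← he, sweepEntry_snd]
  by_contra hE
  have hnext := hp.2.2 (i + 1) hi
  rw [level_take_succ hi, if_neg hE, h0] at hnext
  omega

lemma levelAt_sweep_succ_of_ne (hn : 0 < n) (hp : IsDyck k n p) {m : ℕ}
    (hm : m + 1 < (sweep k n p).length)
    (hne : levelAt (sweep k n p) (m + 1) ≠ levelAt (sweep k n p) m) :
    levelAt (sweep k n p) (m + 1) = levelAt (sweep k n p) m + n := by
  have hm' : m < (sweep k n p).length := Nat.lt_of_succ_lt hm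
  have hlt : levelAt (sweep k n p) m < levelAt (sweep k n p) (m + 1) :=
    lt_of_le_of_ne (monotoneOn_levelAt_sweep hm' hm (Nat.le_succ m)) (Ne.symm hne)
  obtain ⟨i, -, hei⟩ := exists_sweepEntry hm'
  obtain ⟨j, hj, hej⟩ := exists_sweepEntry hm
  have hv : levelAt (sweep k n p) m = level k n (p.take i) := by
    rw [levelAt_of_lt hm', ← hei]; rfl
  have hℓ : levelAt (sweep k n p) (m + 1) = level k n (p.take j) := by
    rw [levelAt_of_lt hm, ← hej]; rfl
  have hgap : level k n (p.take i) + n ≤ level k n (p.take j) := by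
    have := Int.le_of_dvd (by omega) (dvd_sub (dvd_level (k := k) (n := n) (p.take j))
      (dvd_level (k := k) (p.take i)))
    omega
  have hv0 := levelAt_sweep_nonneg hp hm'
  obtain ⟨c, -, hcN, hc⟩ := exists_level_eq_of_le_of_lt
    (dvd_add (dvd_level (k := k) (p.take i)) dvd_rfl) p.length hj.le le_rfl hgap
    (by rw [level_of_isDyck hp]; omega)
  obtain ⟨r, hr, her⟩ := exists_eq_sweepEntry (k := k) (n := n) hcN
  have hrv : levelAt (sweep k n p) r = level k n (p.take i) + n := by
    rw [levelAt_of_lt hr, her, sweepEntry, hc]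
  have hmr : m + 1 ≤ r := Nat.lt_of_not_le fun hrm =>
    absurd (monotoneOn_levelAt_sweep (hrm.trans_lt hm') hm' hrm) (by omega)
  have := monotoneOn_levelAt_sweep hm hr hmr
  omega

lemma exists_last_of_find?_sweepInput {ℓ : ℤ} {e : ℤ × Bool}
    (he : (sweepInput k n p).find? (·.1 = ℓ) = some e) :
    ∃ i < p.length, sweepEntry k n p i = e ∧
      ∀ c, i < c → c < p.length → level k n (p.take c) ≠ ℓ := by
  obtain ⟨-, x, hx, hxe, hbefore⟩ := find?_eq_some_iff_getElem.1 he
  have hlen : (sweepInput k n p).length = p.length := by simp [sweepInput]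
  have hentry : ∀ y (hy : y < (sweepInput k n p).length),
      (sweepInput k n p)[y] = sweepEntry k n p (p.length - 1 - y) := by
    intro y hy
    simp only [sweepInput, getElem_map, getElem_reverse, getElem_range, length_range]
  refine ⟨p.length - 1 - x, by omega, hentry x hx ▸ hxe, fun c hxc hc hcℓ => ?_⟩
  have := hbefore (p.length - 1 - c) (by omega)
  rw [hentry _ (by omega), show p.length - 1 - (p.length - 1 - c) = c by omega] at this
  simp [hcℓ] at this

/-- Ties are broken right to left, so the first entry at a level `ℓ` is the rightmost point
at level `ℓ`; a north step there would force a later return to level `ℓ`. -/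
lemma labelAt_sweep_of_first (hp : IsDyck k n p) {r : ℕ} (hr : r < (sweep k n p).length)
    (hpos : 0 < levelAt (sweep k n p) r)
    (hfirst : ∀ j < r, levelAt (sweep k n p) j < levelAt (sweep k n p) r) :
    labelAt (sweep k n p) r = false := by
  have hfind : (sweepInput k n p).find? (·.1 = levelAt (sweep k n p) r) =
      some (sweep k n p)[r] := by
    rw [find?_sweepInput, find?_eq_some_iff_getElem]
    refine ⟨by simp [levelAt_of_lt hr], r, hr, rfl, fun j hj => ?_⟩
    simpa [← levelAt_of_lt (hj.trans hr)] using (hfirst j hj).ne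
  obtain ⟨i, hi, hir, hlast⟩ := exists_last_of_find?_sweepInput hfind
  rw [levelAt_of_lt hr, ← hir, sweepEntry_fst] at hpos hlast
  rw [labelAt_of_lt hr, ← hir, sweepEntry_snd]
  by_contra hN
  have hstep := level_take_succ (k := k) (n := n) hi
  rw [if_pos (by simpa using hN)] at hstep
  obtain ⟨c, hic, hc, hcl⟩ := exists_level_eq_of_le_of_lt (dvd_level (k := k) (n := n) (p.take i))
    p.length hi le_rfl (by rw [hstep]; exact le_add_of_nonneg_right (by positivity))
    (by rw [level_of_isDyck hp]; exact hpos)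
  exact hlast c (by omega) hc hcl

lemma levelAt_sweep_succ (hn : 0 < n) (hp : IsDyck k n p) {m : ℕ}
    (hm : m + 1 < (sweep k n p).length) :
    levelAt (sweep k n p) (m + 1) = levelAt (sweep k n p) m ∨
      (levelAt (sweep k n p) (m + 1) = levelAt (sweep k n p) m + n ∧
        labelAt (sweep k n p) (m + 1) = false) := by
  by_cases hne : levelAt (sweep k n p) (m + 1) = levelAt (sweep k n p) m
  · exact Or.inl hne
  have hnew := levelAt_sweep_succ_of_ne hn hp hm hne
  refine Or.inr ⟨hnew, labelAt_sweep_of_first hp hm ?_ fun j hj => ?_⟩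
  · linarith [levelAt_sweep_nonneg hp (Nat.lt_of_succ_lt hm)]
  · linarith [monotoneOn_levelAt_sweep (by omega : j < _) (Nat.lt_of_succ_lt hm)
      (Nat.le_of_lt_succ hj)]

/-- A point at level `t` is entered by a north step from `t - kn` or an east step from
`t + n`, except the first one, which is matched with the last. -/
lemma countP_level_sweep (hp : IsDyck k n p) (t : ℤ) :
    (sweep k n p).countP (·.1 = t) =
      (sweep k n p).countP (· = (t - k * n, true)) + (sweep k n p).countP (· = (t + n, false)) := by
  rw [countP_sweep, countP_sweep, countP_sweep,
    ← countP_range_succ_eq p.length (fun i => decide ((sweepEntry k n p i).1 = t))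
      (by simp only [sweepEntry_fst, level_take_zero, level_of_isDyck hp]),
    ← countP_or_of_disjoint _ _ _ fun i _ => by rcases sweepEntry k n p i with ⟨_, _ | _⟩ <;> simp]
  refine countP_congr fun i hi => ?_
  simp only [decide_eq_true_eq, Bool.or_eq_true, sweepEntry, Prod.mk.injEq,
    level_take_succ (mem_range.1 hi)]
  cases p.getD i true <;> simp <;> omega

theorem isSweepSequence_sweep (hn : 0 < n) (hp : IsDyck k n p) :
    IsSweepSequence k n (sweep k n p) where
  monotone := monotoneOn_levelAt_sweep
  levelAt_zero := levelAt_sweep_zero hp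
  labelAt_of_levelAt_eq_zero _ := labelAt_sweep_of_levelAt_eq_zero hn hp
  levelAt_succ _ := levelAt_sweep_succ hn hp
  countP_level := countP_level_sweep hp

end SweepMap

end SweepInversion

/-- Theorem 2.2: the inversion algorithm, applied to the S/W word `σ` output by the
sweep map on a `(kn,n)`-Dyck path, recovers the true sorted level sequence `τ`. -/
theorem stmt9 (k n : ℕ) (hn : 0 < n) (p : List Bool) (hp : IsDyck k n p) :
    (invert k n (sweepWord k n p)).toList =
      (sweep k n p).map (fun a => some a.1) :=
  SweepInversion.invert_eq_of_isSweepSequence (SweepInversion.isSweepSequence_sweep hn hp)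
end
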